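/- Structure preserving bisimilarity is a congruence for action prefixing: if N₁ ≈sp N₂ and a ∈ Act, then a_𝒩 N₁ ≈sp a_𝒩 N₂. -/

import Mathlib

open scoped Classical

/-- A typed Petri net over the action alphabet `Act`.  The flow relation (with arc
weights) is presented through the pre- and post-multisets of each transition. -/
structure PetriNet (Act : Type) : Type 1 where
  Plc : Type
  Tr : Type
  pre : Tr → Multiset Plc
  post : Tr → Multiset Plc
  M0 : Multiset Plc
  typ : Set Act
  lbl : Tr → Act
  lbl_mem : ∀ t, lbl t ∈ typ

namespace PetriNet

variable {Act : Type}

/-- `M [t⟩ M'`: transition `t` is enabled at the marking `M` and firing it yields `M'`. -/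
def fires (N : PetriNet Act) (M : Multiset N.Plc) (t : N.Tr) (M' : Multiset N.Plc) : Prop :=
  N.pre t ≤ M ∧ M' = M - N.pre t + N.post t

/-- The markings reachable from the initial marking (i.e. occurring in some path). -/
inductive Reachable (N : PetriNet Act) : Multiset N.Plc → Prop
  | init : Reachable N N.M0
  | step {M : Multiset N.Plc} {t : N.Tr} {M' : Multiset N.Plc} :
      Reachable N M → N.fires M t M' → Reachable N M'

/-- Bounded parallelism: no reachable marking `M` admits an infinite multiset `U` of
transitions with `∑_{t ∈ U} •t ≤ M`. -/
def BoundedParallelism (N : PetriNet Act) : Prop :=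
  ¬ ∃ (M : Multiset N.Plc) (U : N.Tr → ℕ), N.Reachable M ∧
      (Function.support U).Infinite ∧
      ∀ F : Finset N.Tr, (∑ t ∈ F, U t • N.pre t) ≤ M

/-- A net is safe if every reachable marking is a plain set. -/
def Safe (N : PetriNet Act) : Prop := ∀ M, N.Reachable M → M.Nodup

end PetriNet

/-- A linking between two nets: a multiset of links, i.e. of pairs of places. -/
abbrev Linking {Act : Type} (N₁ N₂ : PetriNet Act) : Type := Multiset (N₁.Plc × N₂.Plc)

/-- First projection of a linking: the induced marking of the first net. -/
def Linking.proj1 {Act : Type} {N₁ N₂ : PetriNet Act} (l : Linking N₁ N₂) :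
    Multiset N₁.Plc := l.map Prod.fst

/-- Second projection of a linking: the induced marking of the second net. -/
def Linking.proj2 {Act : Type} {N₁ N₂ : PetriNet Act} (l : Linking N₁ N₂) :
    Multiset N₂.Plc := l.map Prod.snd

/-- `B` is a structure preserving bisimulation between `N₁` and `N₂`. -/
def IsSPBisim {Act : Type} (N₁ N₂ : PetriNet Act) (B : Set (Linking N₁ N₂)) : Prop :=
  (∀ c l : Linking N₁ N₂, l ∈ B → c ≤ l → ∀ t₁ : N₁.Tr, c.proj1 = N₁.pre t₁ →
      ∃ t₂ : N₂.Tr, N₂.lbl t₂ = N₁.lbl t₁ ∧ c.proj2 = N₂.pre t₂ ∧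
        ∃ cbar : Linking N₁ N₂, cbar.proj1 = N₁.post t₁ ∧ cbar.proj2 = N₂.post t₂ ∧
          l - c + cbar ∈ B) ∧
  (∀ c l : Linking N₁ N₂, l ∈ B → c ≤ l → ∀ t₂ : N₂.Tr, c.proj2 = N₂.pre t₂ →
      ∃ t₁ : N₁.Tr, N₁.lbl t₁ = N₂.lbl t₂ ∧ c.proj1 = N₁.pre t₁ ∧
        ∃ cbar : Linking N₁ N₂, cbar.proj1 = N₁.post t₁ ∧ cbar.proj2 = N₂.post t₂ ∧
          l - c + cbar ∈ B)

/-- Structure preserving bisimilarity `N₁ ≈sp N₂`. -/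
def SPBisimilar {Act : Type} (N₁ N₂ : PetriNet Act) : Prop :=
  N₁.typ = N₂.typ ∧ ∃ B : Set (Linking N₁ N₂), IsSPBisim N₁ N₂ B ∧
    ∃ l ∈ B, l.proj1 = N₁.M0 ∧ l.proj2 = N₂.M0

/-- Presets of the transitions of `a_𝒩 N`; `none` is the fresh transition `t_a`. -/
def prefixPre {Act : Type} (N : PetriNet Act) : Option N.Tr → Multiset (Option N.Plc)
  | none => {none}
  | some t => (N.pre t).map some

/-- Postsets of the transitions of `a_𝒩 N`. -/
def prefixPost {Act : Type} (N : PetriNet Act) : Option N.Tr → Multiset (Option N.Plc)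
  | none => N.M0.map some
  | some t => (N.post t).map some

/-- Labels of the transitions of `a_𝒩 N`. -/
def prefixLbl {Act : Type} (a : Act) (N : PetriNet Act) : Option N.Tr → Act
  | none => a
  | some t => N.lbl t

/-- The action prefix `a_𝒩 N`: a fresh place `none` (the new initial marking) and a
fresh transition `none` labelled `a` consuming it and producing the old initial marking. -/
def prefixNet {Act : Type} (a : Act) (N : PetriNet Act) : PetriNet Act where
  Plc := Option N.Plc
  Tr := Option N.Tr
  pre := prefixPre N
  post := prefixPost N
  M0 := {none}
  typ := N.typ ∪ {a}
  lbl := prefixLbl a N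
  lbl_mem := by
    intro t
    cases t with
    | none => exact Set.mem_union_right _ rfl
    | some t => exact Set.mem_union_left _ (N.lbl_mem t)

/-! If `B` is an sp-bisimulation containing a linking `l₀` of the initial markings, then the
linkings made of `k` links between the two fresh places together with a linking `m` of the original
nets, such that `m + k • l₀ ∈ B`, form an sp-bisimulation between the prefixed nets: firing `t_a`
on both sides trades one fresh link for `l₀`, and every other transition only touches `m`, where
`B` answers it. The clause for the second net is the clause for the first one after swapping the
roles of the two nets. -/

namespace Multiset

variable {α β : Type*}

theorem exists_eq_map_of_le_map {f : α → β} (hf : Function.Injective f) {c : Multiset β} :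
    ∀ {m : Multiset α}, c ≤ m.map f → ∃ c₀ ≤ m, c = c₀.map f := by
  induction c using Multiset.induction_on with
  | empty => exact fun _ => ⟨0, zero_le _, rfl⟩
  | cons b c ih =>
    intro m h
    obtain ⟨x, hx, rfl⟩ := mem_map.1 (mem_of_le h (mem_cons_self _ _))
    have h' : c ≤ (m.erase x).map f := by
      simpa [map_erase f hf] using erase_le_erase (f x) h
    obtain ⟨c₀, hc₀, rfl⟩ := ih h'
    exact ⟨x ::ₘ c₀, (cons_le_cons x hc₀).trans_eq (cons_erase hx), by simp⟩

theorem exists_eq_replicate_add_map_of_le {f : α → β} (hf : Function.Injective f) {p : β}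
    {k : ℕ} {m : Multiset α} {c : Multiset β} (h : c ≤ replicate k p + m.map f) :
    ∃ j ≤ k, ∃ c₀ ≤ m, c = replicate j p + c₀.map f := by
  obtain ⟨j, hj, hrep⟩ := le_replicate_iff.1 (inter_le_right (s := c) (t := replicate k p))
  obtain ⟨c₀, hc₀, hmap⟩ := exists_eq_map_of_le_map hf (Multiset.sub_le_iff_le_add'.2 h)
  exact ⟨j, hj, c₀, hc₀, by rw [← hrep, ← hmap, add_comm, sub_add_inter]⟩

theorem replicate_none_add_map_some_inj {j j' : ℕ} {s t : Multiset α} :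
    replicate j none + s.map some = replicate j' none + t.map some ↔ j = j' ∧ s = t := by
  refine ⟨fun h => ?_, by rintro ⟨rfl, rfl⟩; rfl⟩
  have hj : j = j' := by simpa using congrArg (count none) h
  subst hj
  exact ⟨rfl, map_injective (Option.some_injective α) (add_left_cancel h)⟩

theorem replicate_none_add_map_some_eq_singleton_none {j : ℕ} {s : Multiset α} :
    replicate j none + s.map some = {none} ↔ j = 1 ∧ s = 0 := by
  simpa using replicate_none_add_map_some_inj (j' := 1) (t := 0)

theorem replicate_none_add_map_some_eq_map_some {j : ℕ} {s t : Multiset α} :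
    replicate j none + s.map some = t.map some ↔ j = 0 ∧ s = t := by
  simpa using replicate_none_add_map_some_inj (j' := 0) (t := t)

end Multiset

section Linking

variable {Act : Type} {N₁ N₂ : PetriNet Act}

def Linking.swap (l : Linking N₁ N₂) : Linking N₂ N₁ := l.map Prod.swap

@[simp]
theorem Linking.swap_swap (l : Linking N₁ N₂) : l.swap.swap = l := by
  simp [Linking.swap]

@[simp]
theorem Linking.proj1_swap (l : Linking N₁ N₂) : l.swap.proj1 = l.proj2 := by
  simp [Linking.swap, Linking.proj1, Linking.proj2]

@[simp]
theorem Linking.proj2_swap (l : Linking N₁ N₂) : l.swap.proj2 = l.proj1 := by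
  simp [Linking.swap, Linking.proj1, Linking.proj2]

theorem Linking.swap_le_swap {c l : Linking N₁ N₂} : c.swap ≤ l.swap ↔ c ≤ l :=
  Multiset.map_le_map_iff Prod.swap_injective

theorem Linking.swap_sub_add {c l : Linking N₁ N₂} (cbar : Linking N₁ N₂) (h : c ≤ l) :
    (l - c + cbar).swap = l.swap - c.swap + cbar.swap := by
  obtain ⟨r, rfl⟩ := Multiset.le_iff_exists_add.1 h
  simp [Linking.swap]

end Linking

def IsSPSimulation {Act : Type} (N₁ N₂ : PetriNet Act) (B : Set (Linking N₁ N₂)) : Prop :=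
  ∀ c l : Linking N₁ N₂, l ∈ B → c ≤ l → ∀ t₁ : N₁.Tr, c.proj1 = N₁.pre t₁ →
    ∃ t₂ : N₂.Tr, N₂.lbl t₂ = N₁.lbl t₁ ∧ c.proj2 = N₂.pre t₂ ∧
      ∃ cbar : Linking N₁ N₂, cbar.proj1 = N₁.post t₁ ∧ cbar.proj2 = N₂.post t₂ ∧
        l - c + cbar ∈ B

theorem isSPBisim_iff {Act : Type} {N₁ N₂ : PetriNet Act} {B : Set (Linking N₁ N₂)} :
    IsSPBisim N₁ N₂ B ↔ IsSPSimulation N₁ N₂ B ∧ IsSPSimulation N₂ N₁ (Linking.swap ⁻¹' B) := by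
  refine and_congr_right' ⟨fun hB c l hl hc t₂ hpre => ?_, fun hS c l hl hc t₂ hpre => ?_⟩
  · obtain ⟨t₁, hlbl, hpre₁, cbar, h₁, h₂, hmem⟩ :=
      hB c.swap l.swap hl (Linking.swap_le_swap.2 hc) t₂ (by simpa using hpre)
    refine ⟨t₁, hlbl, by simpa using hpre₁, cbar.swap, by simpa, by simpa, ?_⟩
    simpa [Linking.swap_sub_add _ hc] using hmem
  · obtain ⟨t₁, hlbl, hpre₁, cbar, h₁, h₂, hmem⟩ :=
      hS c.swap l.swap (by simpa using hl) (Linking.swap_le_swap.2 hc) t₂ (by simpa using hpre)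
    refine ⟨t₁, hlbl, by simpa using hpre₁, cbar.swap, by simpa, by simpa, ?_⟩
    simpa [Linking.swap_sub_add _ (Linking.swap_le_swap.2 hc)] using hmem

section Prefix

open Multiset

variable {Act : Type} {N₁ N₂ : PetriNet Act} (a : Act)

section Net

variable (N : PetriNet Act)

/-! The places of `prefixNet a N` are `Option N.Plc` only after unfolding `prefixNet`, so `simp`
can be left with a goal `x = x` whose two sides it sees at these two types; `rfl` closes such
goals. -/

@[simp]
theorem prefixNet_pre_none : (prefixNet a N).pre none = ({none} : Multiset (Option N.Plc)) :=
  rfl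

@[simp]
theorem prefixNet_pre_some (t : N.Tr) :
    (prefixNet a N).pre (some t) = ((N.pre t).map some : Multiset (Option N.Plc)) :=
  rfl

@[simp]
theorem prefixNet_post_none :
    (prefixNet a N).post none = (N.M0.map some : Multiset (Option N.Plc)) :=
  rfl

@[simp]
theorem prefixNet_post_some (t : N.Tr) :
    (prefixNet a N).post (some t) = ((N.post t).map some : Multiset (Option N.Plc)) :=
  rfl

end Net

def prefixLinking (k : ℕ) (l : Linking N₁ N₂) : Linking (prefixNet a N₁) (prefixNet a N₂) :=
  (replicate k (none, none) + l.map (Prod.map some some) :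
    Multiset (Option N₁.Plc × Option N₂.Plc))

@[simp]
theorem proj1_prefixLinking (k : ℕ) (l : Linking N₁ N₂) :
    (prefixLinking a k l).proj1 =
      (replicate k none + l.proj1.map some : Multiset (Option N₁.Plc)) := by
  show map Prod.fst (replicate k (none, none) + l.map (Prod.map some some) :
    Multiset (Option N₁.Plc × Option N₂.Plc)) = _
  simp [Linking.proj1]

@[simp]
theorem proj2_prefixLinking (k : ℕ) (l : Linking N₁ N₂) :
    (prefixLinking a k l).proj2 =
      (replicate k none + l.proj2.map some : Multiset (Option N₂.Plc)) := by
  show map Prod.snd (replicate k (none, none) + l.map (Prod.map some some) :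
    Multiset (Option N₁.Plc × Option N₂.Plc)) = _
  simp [Linking.proj2]

@[simp]
theorem swap_prefixLinking (k : ℕ) (l : Linking N₁ N₂) :
    (prefixLinking a k l).swap = prefixLinking a k l.swap := by
  show map Prod.swap (replicate k (none, none) + l.map (Prod.map some some) :
    Multiset (Option N₁.Plc × Option N₂.Plc)) = _
  simp [prefixLinking, Linking.swap]
  rfl

theorem prefixLinking_add (k k' : ℕ) (l l' : Linking N₁ N₂) :
    prefixLinking a k l + prefixLinking a k' l' = prefixLinking a (k + k') (l + l') := by
  simp only [prefixLinking, replicate_add, map_add]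
  abel

theorem prefixLinking_add_sub_prefixLinking (k : ℕ) (c r : Linking N₁ N₂) {j : ℕ} (hj : j ≤ k) :
    prefixLinking a k (c + r) - prefixLinking a j c = prefixLinking a (k - j) r := by
  obtain ⟨i, rfl⟩ := Nat.exists_eq_add_of_le hj
  rw [← prefixLinking_add, add_tsub_cancel_left, Nat.add_sub_cancel_left]

theorem exists_eq_prefixLinking_of_le {c : Linking (prefixNet a N₁) (prefixNet a N₂)} {k : ℕ}
    {m : Linking N₁ N₂} (h : c ≤ prefixLinking a k m) :
    ∃ j ≤ k, ∃ c₀ ≤ m, c = prefixLinking a j c₀ :=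
  exists_eq_replicate_add_map_of_le
    ((Option.some_injective _).prodMap (Option.some_injective _)) h

/-- `k` counts the links between the two fresh places that `t_a` has yet to consume, each of which
will release a copy of `l₀`. Transitions with empty preset may already have changed `m`, which is
why only `m + k • l₀` is required to lie in `B`. -/
def prefixLinkings (B : Set (Linking N₁ N₂)) (l₀ : Linking N₁ N₂) :
    Set (Linking (prefixNet a N₁) (prefixNet a N₂)) :=
  {L | ∃ (k : ℕ) (m : Linking N₁ N₂), m + k • l₀ ∈ B ∧ L = prefixLinking a k m}

theorem swap_preimage_prefixLinkings (B : Set (Linking N₁ N₂)) (l₀ : Linking N₁ N₂) :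
    Linking.swap ⁻¹' prefixLinkings a B l₀ = prefixLinkings a (Linking.swap ⁻¹' B) l₀.swap := by
  ext L
  constructor
  · rintro ⟨k, m, hm, hL⟩
    refine ⟨k, m.swap, by simpa [Linking.swap, map_nsmul] using hm, ?_⟩
    rw [← L.swap_swap, hL, swap_prefixLinking]
  · rintro ⟨k, m, hm, rfl⟩
    exact ⟨k, m.swap, by simpa [Linking.swap, map_nsmul] using hm, swap_prefixLinking a k m⟩

theorem IsSPSimulation.prefix {B : Set (Linking N₁ N₂)} {l₀ : Linking N₁ N₂}
    (hB : IsSPSimulation N₁ N₂ B) (h₁ : l₀.proj1 = N₁.M0) (h₂ : l₀.proj2 = N₂.M0) :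
    IsSPSimulation (prefixNet a N₁) (prefixNet a N₂) (prefixLinkings a B l₀) := by
  rintro c _ ⟨k, m, hm, rfl⟩ hc t₁ hpre
  obtain ⟨j, hj, c₀, hc₀, rfl⟩ := exists_eq_prefixLinking_of_le a hc
  obtain ⟨r, rfl⟩ := Multiset.le_iff_exists_add.1 hc₀
  cases t₁ with
  | none =>
    simp only [proj1_prefixLinking, prefixNet_pre_none] at hpre
    obtain ⟨rfl, hc₀⟩ := replicate_none_add_map_some_eq_singleton_none.1 hpre
    obtain rfl : c₀ = 0 := Multiset.map_eq_zero.1 hc₀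
    refine ⟨none, rfl, rfl, prefixLinking a 0 l₀, by simp [h₁]; rfl, by simp [h₂]; rfl,
      k - 1, r + l₀, ?_, ?_⟩
    · obtain ⟨k, rfl⟩ := Nat.exists_eq_add_of_le' hj
      simpa [succ_nsmul', add_assoc] using hm
    · rw [prefixLinking_add_sub_prefixLinking a k 0 r hj, prefixLinking_add, add_zero]
  | some t =>
    simp only [proj1_prefixLinking, prefixNet_pre_some] at hpre
    obtain ⟨rfl, hc₀⟩ := replicate_none_add_map_some_eq_map_some.1 hpre
    obtain ⟨t₂, hlbl, hpre₂, cbar, hcbar₁, hcbar₂, hmem⟩ :=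
      hB c₀ (c₀ + r + k • l₀) hm (le_add_right (le_add_right le_rfl)) t hc₀
    refine ⟨some t₂, hlbl, by simp [hpre₂]; rfl, prefixLinking a 0 cbar, by simp [hcbar₁]; rfl,
      by simp [hcbar₂]; rfl, k, r + cbar, ?_, ?_⟩
    · rwa [add_assoc, add_tsub_cancel_left, add_right_comm] at hmem
    · rw [prefixLinking_add_sub_prefixLinking a k c₀ r hj, prefixLinking_add, Nat.sub_zero,
        add_zero]

theorem IsSPBisim.prefix {B : Set (Linking N₁ N₂)} {l₀ : Linking N₁ N₂}
    (hB : IsSPBisim N₁ N₂ B) (h₁ : l₀.proj1 = N₁.M0) (h₂ : l₀.proj2 = N₂.M0) :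
    IsSPBisim (prefixNet a N₁) (prefixNet a N₂) (prefixLinkings a B l₀) := by
  rw [isSPBisim_iff] at hB ⊢
  rw [swap_preimage_prefixLinkings]
  exact ⟨hB.1.prefix a h₁ h₂, hB.2.prefix a (by simpa) (by simpa)⟩

end Prefix

theorem spBisimilar_congr_prefix_general {Act : Type} (N₁ N₂ : PetriNet Act) (a : Act)
    (h : SPBisimilar N₁ N₂) :
    SPBisimilar (prefixNet a N₁) (prefixNet a N₂) := by
  obtain ⟨htyp, B, hB, l₀, hl₀, h₁, h₂⟩ := h
  refine ⟨congrArg (· ∪ ({a} : Set Act)) htyp, prefixLinkings a B l₀, hB.prefix a h₁ h₂,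
    prefixLinking a 1 0, ⟨1, 0, by simpa using hl₀, rfl⟩, rfl, rfl⟩

/-- Structure preserving bisimilarity is a congruence for action prefixing. -/
theorem spBisimilar_congr_prefix {Act : Type} (N₁ N₂ : PetriNet Act)
    (h₁ : N₁.BoundedParallelism) (h₂ : N₂.BoundedParallelism) (a : Act)
    (h : SPBisimilar N₁ N₂) :
    SPBisimilar (prefixNet a N₁) (prefixNet a N₂) :=
  spBisimilar_congr_prefix_general N₁ N₂ a h
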